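/- arXiv:0712.4337 — 2 statements merged into one kernel-verified Lean document; each statement's English description precedes it below -/
import Mathlib

section
/- Let (X,T) be a non-periodic linearly recurrent minimal subshift with constant K on alphabet A, let φ : (X,T) → (Y,T) be a factor map onto a non-periodic subshift (Y,T) on alphabet B, and let f : A^{2r+1} → B be a block map defining φ, i.e., (φ(x))_i = f(x_{[i,i+2r]}) for all i ∈ ℕ and x ∈ X. Extend f to words v of length n ≥ 2r+1 by (f(v))_i = f(v_{[i,i+2r]}) for 0 ≤ i ≤ n−2r−1. Then there exists n₀ such that for every u ∈ L(Y) with |u| ≥ n₀, #{ v ∈ L(X) : |v| = |u| + 2r and f(v) = u } ≤ 4K(K+1). -/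
/-- The factor `x_{[i, i+n)}` of a sequence. -/
def factorAt {A : Type*} (x : ℕ → A) (i n : ℕ) : List A := (List.range n).map fun k => x (i + k)

/-- `i` is an occurrence of the word `u` in the sequence `x`. -/
def OccursAt {A : Type*} (x : ℕ → A) (u : List A) (i : ℕ) : Prop := factorAt x i u.length = u

/-- `u` is a factor of `x`. -/
def IsFactor {A : Type*} (x : ℕ → A) (u : List A) : Prop := ∃ i, OccursAt x u i

/-- `u` occurs in `x` with bounded gaps (its set of occurrences is syndetic). -/
def BoundedGaps {A : Type*} (x : ℕ → A) (u : List A) : Prop :=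
  ∃ g, 0 < g ∧ ∀ i, ∃ j, i ≤ j ∧ j < i + g ∧ OccursAt x u j

/-- `x` is uniformly recurrent: every factor occurs with bounded gaps. -/
def UniformlyRecurrent {A : Type*} (x : ℕ → A) : Prop :=
  ∀ u, IsFactor x u → BoundedGaps x u

/-- `w` is a return word to `u` in `x`: `w = x_{[j,k)}` for consecutive
occurrences `j < k` of `u` in `x`. -/
def IsReturnWord {A : Type*} (x : ℕ → A) (u w : List A) : Prop :=
  ∃ j k, j < k ∧ OccursAt x u j ∧ OccursAt x u k ∧
    (∀ m, j < m → m < k → ¬ OccursAt x u m) ∧ w = factorAt x j (k - j)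

/-- `x` is linearly recurrent with constant `K`: it is uniformly recurrent and every
return word `w` to every nonempty factor `u` satisfies `|w| ≤ K|u|`. -/
def LinearlyRecurrent {A : Type*} (x : ℕ → A) (K : ℕ) : Prop :=
  UniformlyRecurrent x ∧ ∀ u w, u ≠ [] → IsReturnWord x u w → w.length ≤ K * u.length

/-- `x` is ultimately periodic. -/
def UltimatelyPeriodic {A : Type*} (x : ℕ → A) : Prop :=
  ∃ N t, 0 < t ∧ ∀ n, N ≤ n → x (n + t) = x n
/-- The shift transformation on one-sided sequences. -/
def shift {A : Type*} (x : ℕ → A) : ℕ → A := fun n => x (n + 1)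

/-- The language of (the elements of) a subshift. -/
def LangOf {A : Type*} (X : Set (ℕ → A)) : Set (List A) := { w | ∃ x ∈ X, IsFactor x w }

/-- The set of return words to `u` in the subshift `X`. -/
def ReturnWordsOf {A : Type*} (X : Set (ℕ → A)) (u : List A) : Set (List A) :=
  { w | ∃ x ∈ X, IsReturnWord x u w }
section TopoDefs

variable {A : Type*} [TopologicalSpace A] {B : Type*} [TopologicalSpace B]

/-- A subshift: a closed, shift-invariant set of sequences. -/
def IsSubshift (X : Set (ℕ → A)) : Prop := IsClosed X ∧ ∀ x ∈ X, shift x ∈ X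

/-- A minimal subshift: the only closed shift-invariant subsets are `∅` and `X`. -/
def IsMinimalSubshift (X : Set (ℕ → A)) : Prop :=
  IsSubshift X ∧ X.Nonempty ∧
  ∀ Y ⊆ X, IsClosed Y → (∀ y ∈ Y, shift y ∈ Y) → Y = ∅ ∨ Y = X

/-- `φ` is a factor map from the subshift `X` onto the subshift `Y`:
continuous on `X`, onto `Y`, commuting with the shift. -/
def IsFactorMapOn (φ : (ℕ → A) → (ℕ → B)) (X : Set (ℕ → A)) (Y : Set (ℕ → B)) : Prop :=
  ContinuousOn φ X ∧ φ '' X = Y ∧ ∀ x ∈ X, φ (shift x) = shift (φ x)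

/-- The subshifts `X` and `Y` are isomorphic: there is a bijective factor map. -/
def SubshiftIsomorphic (X : Set (ℕ → A)) (Y : Set (ℕ → B)) : Prop :=
  ∃ φ : (ℕ → A) → (ℕ → B), IsFactorMapOn φ X Y ∧ Set.InjOn φ X

end TopoDefs


/-! ### Auxiliary lemmas -/

section AuxBasic

variable {C : Type*}

lemma factorAt_length (x : ℕ → C) (i n : ℕ) : (factorAt x i n).length = n := by
  simp [factorAt]

lemma factorAt_eq_iff {x y : ℕ → C} {i j n : ℕ} :
    factorAt x i n = factorAt y j n ↔ ∀ k < n, x (i + k) = y (j + k) := by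
  simp [factorAt, List.map_inj_left]

lemma factorAt_getD [Inhabited C] (x : ℕ → C) (i : ℕ) {k n : ℕ} (h : k < n) :
    (factorAt x i n).getD k default = x (i + k) := by
  rw [List.getD_eq_getElem _ _ (by simpa [factorAt_length] using h)]
  simp [factorAt]

lemma factorAt_ne_nil (x : ℕ → C) (i : ℕ) {n : ℕ} (hn : 0 < n) : factorAt x i n ≠ [] := by
  intro h
  have := congrArg List.length h
  rw [factorAt_length] at this
  simp at this
  omega

lemma occursAt_factorAt (x : ℕ → C) (i n : ℕ) : OccursAt x (factorAt x i n) i := by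
  show factorAt x i (factorAt x i n).length = factorAt x i n
  rw [factorAt_length]

lemma OccursAt.getD' [Inhabited C] {x : ℕ → C} {u : List C} {i : ℕ}
    (h : OccursAt x u i) {k : ℕ} (hk : k < u.length) : u.getD k default = x (i + k) := by
  conv_lhs => rw [← h]
  exact factorAt_getD x i hk

lemma OccursAt.eq_factorAt {x : ℕ → C} {u : List C} {i : ℕ} (h : OccursAt x u i) :
    u = factorAt x i u.length := h.symm

lemma factorAt_eq_of_getD [Inhabited C] {x : ℕ → C} {u : List C} {i n : ℕ}
    (hlen : u.length = n) (h : ∀ k < n, x (i + k) = u.getD k default) :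
    factorAt x i n = u := by
  apply List.ext_getElem (by simp [factorAt_length, hlen])
  intro k h1 h2
  rw [factorAt_length] at h1
  have := h k h1
  rw [← List.getD_eq_getElem u default h2, ← this]
  simp [factorAt]

lemma occursAt_iff_getD [Inhabited C] {x : ℕ → C} {u : List C} {i : ℕ} :
    OccursAt x u i ↔ ∀ k < u.length, x (i + k) = u.getD k default :=
  ⟨fun h k hk => (h.getD' hk).symm, fun h => factorAt_eq_of_getD rfl h⟩

lemma factorAt_shift (x : ℕ → C) (i n : ℕ) : factorAt (shift x) i n = factorAt x (i + 1) n := by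
  simp only [factorAt, shift]
  exact List.map_inj_left.2 fun a _ => congrArg x (by omega)

lemma occursAt_shift {x : ℕ → C} {u : List C} {i : ℕ} :
    OccursAt (shift x) u i ↔ OccursAt x u (i + 1) := by
  show factorAt (shift x) i u.length = u ↔ factorAt x (i + 1) u.length = u
  rw [factorAt_shift]

lemma factorAt_take (x : ℕ → C) (i k m : ℕ) :
    (factorAt x i m).take k = factorAt x i (min k m) := by
  simp [factorAt, ← List.map_take, List.take_range]

lemma finite_length_eq (C : Type*) [Finite C] (n : ℕ) : {l : List C | l.length = n}.Finite := by
  have hsub : {l : List C | l.length = n} ⊆ (fun g : Fin n → C => List.ofFn g) '' Set.univ := by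
    intro l hl
    have hl' : l.length = n := hl
    subst hl'
    exact ⟨l.get, trivial, List.ofFn_get l⟩
  exact (Set.finite_univ.image _).subset hsub

/-- The set of factors of length `n` of a sequence. -/
def factSet (z : ℕ → C) (n : ℕ) : Set (List C) := {w | w.length = n ∧ IsFactor z w}

lemma factSet_finite [Finite C] (z : ℕ → C) (n : ℕ) : (factSet z n).Finite :=
  (finite_length_eq C n).subset fun _ hw => hw.1

lemma factorAt_mem_factSet (z : ℕ → C) (i n : ℕ) : factorAt z i n ∈ factSet z n :=
  ⟨factorAt_length z i n, ⟨i, occursAt_factorAt z i n⟩⟩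

lemma ncard_Iio (n : ℕ) : (Set.Iio n).ncard = n := by
  rw [← Finset.coe_Iio, Set.ncard_coe_finset]
  simp

lemma ncard_Iic (n : ℕ) : (Set.Iic n).ncard = n + 1 := by
  rw [← Finset.coe_Iic, Set.ncard_coe_finset]
  simp

end AuxBasic

section MorseHedlund

variable {C : Type*} [Finite C]

/-- Morse–Hedlund: if the number of factors of length `e` is at most `e`, the sequence is
ultimately periodic. -/
lemma ultimatelyPeriodic_of_complexity_le {z : ℕ → C} {e : ℕ}
    (he : 1 ≤ e) (hcard : (factSet z e).ncard ≤ e) : UltimatelyPeriodic z := by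
  classical
  -- complexity is monotone, and equals 1 at length 0
  have hfin : ∀ k, (factSet z k).Finite := factSet_finite z
  have hzero : (factSet z 0).ncard = 1 := by
    have : factSet z 0 = {([] : List C)} := by
      ext w
      constructor
      · intro hw
        simpa using List.length_eq_zero_iff.1 hw.1
      · rintro rfl
        exact ⟨rfl, 0, rfl⟩
    rw [this, Set.ncard_singleton]
  have htake : ∀ (k i : ℕ), (factorAt z i (k+1)).take k = factorAt z i k := by
    intro k i
    rw [factorAt_take]
    congr 1
    omega
  have hmono : ∀ k, (factSet z k).ncard ≤ (factSet z (k+1)).ncard := by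
    intro k
    have hsub : factSet z k ⊆ (fun l : List C => l.take k) '' factSet z (k+1) := by
      rintro w ⟨hlen, i, hocc⟩
      refine ⟨factorAt z i (k+1), factorAt_mem_factSet z i (k+1), ?_⟩
      exact (by rw [htake k i, ← hlen]; exact hocc : (factorAt z i (k+1)).take k = w)
    calc (factSet z k).ncard ≤ ((fun l : List C => l.take k) '' factSet z (k+1)).ncard :=
          Set.ncard_le_ncard hsub ((hfin (k+1)).image _)
      _ ≤ (factSet z (k+1)).ncard := Set.ncard_image_le (hfin (k+1))
  -- there is a level where complexity does not grow
  have hlevel : ∃ k < e, (factSet z (k+1)).ncard ≤ (factSet z k).ncard := by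
    by_contra hcon
    push_neg at hcon
    have hgrow : ∀ k, k ≤ e → k + 1 ≤ (factSet z k).ncard := by
      intro k
      induction k with
      | zero => intro _; omega
      | succ k ih =>
        intro hk
        have h1 := ih (by omega)
        have h2 := hcon k (by omega)
        omega
    have := hgrow e le_rfl
    omega
  obtain ⟨k, hke, hk⟩ := hlevel
  -- determinism: windows of length k determine the next symbol
  have det : ∀ i j, factorAt z i k = factorAt z j k → z (i + k) = z (j + k) := by
    intro i j hij
    by_contra hne
    have hA1 : factorAt z i (k+1) ∈ factSet z (k+1) := factorAt_mem_factSet z i (k+1)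
    have hA2 : factorAt z j (k+1) ∈ factSet z (k+1) := factorAt_mem_factSet z j (k+1)
    have hne12 : factorAt z i (k+1) ≠ factorAt z j (k+1) := by
      intro h
      exact hne (factorAt_eq_iff.1 h k (by omega))
    have hsub : factSet z k ⊆
        (fun l : List C => l.take k) '' (factSet z (k+1) \ {factorAt z j (k+1)}) := by
      rintro w ⟨hlen, i', hocc⟩
      by_cases hcase : factorAt z i' (k+1) = factorAt z j (k+1)
      · refine ⟨factorAt z i (k+1), ⟨hA1, by simpa using hne12⟩, ?_⟩
        have h1 : factorAt z i' k = w := by rw [← hlen]; exact hocc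
        have h2 : factorAt z j k = factorAt z i' k := by
          rw [← htake k j, ← htake k i', hcase]
        exact (by rw [htake k i, hij, h2, h1] : (factorAt z i (k+1)).take k = w)
      · refine ⟨factorAt z i' (k+1), ⟨factorAt_mem_factSet z i' (k+1), by simpa using hcase⟩, ?_⟩
        exact (by rw [htake k i', ← hlen]; exact hocc : (factorAt z i' (k+1)).take k = w)
    have hlt : (factSet z k).ncard < (factSet z (k+1)).ncard := by
      have hssub : factSet z (k+1) \ {factorAt z j (k+1)} ⊂ factSet z (k+1) := by
        constructor
        · exact Set.diff_subset
        · intro hsup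
          have := hsup hA2
          simp at this
      calc (factSet z k).ncard
          ≤ ((fun l : List C => l.take k) '' (factSet z (k+1) \ {factorAt z j (k+1)})).ncard :=
            Set.ncard_le_ncard hsub (((hfin (k+1)).subset Set.diff_subset).image _)
        _ ≤ (factSet z (k+1) \ {factorAt z j (k+1)}).ncard :=
            Set.ncard_image_le ((hfin (k+1)).subset Set.diff_subset)
        _ < (factSet z (k+1)).ncard := Set.ncard_lt_ncard hssub (hfin (k+1))
    omega
  -- pigeonhole: two equal windows
  have hpigeon : ∃ i j, i < j ∧ factorAt z i k = factorAt z j k := by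
    haveI := (hfin k).to_subtype
    obtain ⟨i, j, hne, heq⟩ := Finite.exists_ne_map_eq_of_infinite
      (fun i : ℕ => (⟨factorAt z i k, factorAt_mem_factSet z i k⟩ : factSet z k))
    have heq' : factorAt z i k = factorAt z j k := congrArg Subtype.val heq
    rcases lt_or_gt_of_ne hne with h | h
    · exact ⟨i, j, h, heq'⟩
    · exact ⟨j, i, h, heq'.symm⟩
  obtain ⟨i, j, hij, hw⟩ := hpigeon
  have cl : ∀ t, factorAt z (i + t) k = factorAt z (j + t) k := by
    intro t
    induction t with
    | zero => simpa using hw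
    | succ t ih =>
      have hd := det _ _ ih
      rw [factorAt_eq_iff] at ih ⊢
      intro s hs
      rcases Nat.lt_or_ge (s+1) k with h | h
      · have h' := ih (s+1) h
        have e1 : i + (t+1) + s = i + t + (s+1) := by omega
        have e2 : j + (t+1) + s = j + t + (s+1) := by omega
        rw [e1, e2]
        exact h'
      · have hsk : s + 1 = k := by omega
        have e1 : i + (t+1) + s = i + t + k := by omega
        have e2 : j + (t+1) + s = j + t + k := by omega
        rw [e1, e2]
        exact hd
  refine ⟨i + k, j - i, by omega, fun n hn => ?_⟩
  have hkey := det _ _ (cl (n - (i + k)))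
  have e1 : i + (n - (i + k)) + k = n := by omega
  have e2 : j + (n - (i + k)) + k = n + (j - i) := by omega
  rw [e1, e2] at hkey
  exact hkey.symm

end MorseHedlund

section FiniteOfUP

variable {C : Type*}

/-- If all the prefixes of the elements of `S` appear as factors of a single ultimately
periodic sequence, then `S` is finite. -/
lemma finite_of_ultimatelyPeriodic (w : ℕ → C) (S : Set (ℕ → C))
    (hUP : UltimatelyPeriodic w)
    (hL : ∀ z ∈ S, ∀ ℓ : ℕ, ∃ q, factorAt z 0 ℓ = factorAt w q ℓ) : S.Finite := by
  classical
  obtain ⟨N, t, ht, hper⟩ := hUP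
  have red : ∀ ℓ q, ∃ q' < N + t, factorAt w q' ℓ = factorAt w q ℓ := by
    intro ℓ q
    induction q using Nat.strong_induction_on with
    | _ q ih =>
      rcases Nat.lt_or_ge q (N + t) with h | h
      · exact ⟨q, h, rfl⟩
      · obtain ⟨q', hq', he⟩ := ih (q - t) (by omega)
        refine ⟨q', hq', he.trans ?_⟩
        rw [factorAt_eq_iff]
        intro s hs
        have h1 : w (q - t + s + t) = w (q - t + s) := hper _ (by omega)
        have e1 : q - t + s + t = q + s := by omega
        rw [e1] at h1
        exact h1.symm
  by_contra hinf
  obtain ⟨T, hTS, hTfin, hTcard⟩ :=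
    Set.Infinite.exists_subset_ncard_eq hinf (N + t + 1)
  set d : (ℕ → C) → (ℕ → C) → ℕ :=
    fun a b => if h : ∃ n, a n ≠ b n then Nat.find h else 0 with hd
  obtain ⟨M, hM⟩ := ((hTfin.prod hTfin).image fun p => d p.1 p.2).bddAbove
  set ℓ := M + 1 with hℓ
  have hinj : Set.InjOn (fun z : ℕ → C => factorAt z 0 ℓ) T := by
    intro a ha b hb hab
    by_contra hne
    have hex : ∃ n, a n ≠ b n := by
      by_contra hno
      push_neg at hno
      exact hne (funext hno)
    have hdm : d a b ≤ M := hM ⟨(a, b), Set.mem_prod.2 ⟨ha, hb⟩, rfl⟩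
    have hdab : d a b = Nat.find hex := by rw [hd]; exact dif_pos hex
    have hlt : Nat.find hex < ℓ := by omega
    have := factorAt_eq_iff.1 hab (Nat.find hex) hlt
    simp only [Nat.zero_add] at this
    exact Nat.find_spec hex this
  have hsub : (fun z : ℕ → C => factorAt z 0 ℓ) '' T ⊆
      (fun q => factorAt w q ℓ) '' Set.Iio (N + t) := by
    rintro _ ⟨z, hz, rfl⟩
    obtain ⟨q, hq⟩ := hL z (hTS hz) ℓ
    obtain ⟨q', hq', he⟩ := red ℓ q
    exact ⟨q', hq', he.trans hq.symm⟩
  have c1 : T.ncard ≤ (Set.Iio (N + t)).ncard := by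
    calc T.ncard = ((fun z : ℕ → C => factorAt z 0 ℓ) '' T).ncard :=
          (Set.ncard_image_of_injOn hinj).symm
      _ ≤ ((fun q => factorAt w q ℓ) '' Set.Iio (N + t)).ncard :=
          Set.ncard_le_ncard hsub ((Set.finite_Iio _).image _)
      _ ≤ (Set.Iio (N + t)).ncard := Set.ncard_image_le (Set.finite_Iio _)
  rw [hTcard, ncard_Iio] at c1
  omega

end FiniteOfUP

section LinRec

variable {A : Type*}

/-- The linear recurrence constant is at least 1. -/
lemma one_le_of_linearlyRecurrent {x₀ : ℕ → A} {K : ℕ}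
    (hLR : LinearlyRecurrent x₀ K) : 1 ≤ K := by
  classical
  have h0 : OccursAt x₀ [x₀ 0] 0 := by
    show factorAt x₀ 0 1 = [x₀ 0]
    simp [factorAt, List.range_succ]
  obtain ⟨g, hg, hgap⟩ := hLR.1 [x₀ 0] ⟨0, h0⟩
  have hex : ∃ j, 1 ≤ j ∧ OccursAt x₀ [x₀ 0] j := by
    obtain ⟨j, h1, _, h3⟩ := hgap 1
    exact ⟨j, h1, h3⟩
  have hspec := Nat.find_spec hex
  have hret : IsReturnWord x₀ [x₀ 0] (factorAt x₀ 0 (Nat.find hex - 0)) := by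
    refine ⟨0, Nat.find hex, by omega, h0, hspec.2, ?_, rfl⟩
    intro m hm1 hm2 hocc'
    exact Nat.find_min hex hm2 ⟨by omega, hocc'⟩
  have hlen := hLR.2 _ _ (by simp) hret
  rw [factorAt_length] at hlen
  simp at hlen
  omega

/-- Syndeticity with linear gap: beyond the first occurrence, every word occurs in every
window of length `K * |v|`. -/
lemma syndetic_occ {x₀ : ℕ → A} {K : ℕ} (hLR : LinearlyRecurrent x₀ K)
    {v : List A} (hv : v ≠ []) {q₀ : ℕ} (h0 : OccursAt x₀ v q₀) :
    ∀ i, q₀ ≤ i → ∃ j, i ≤ j ∧ j < i + K * v.length ∧ OccursAt x₀ v j := by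
  classical
  intro i hi
  have hK1 : 1 ≤ K := one_le_of_linearlyRecurrent hLR
  have hv1 : 1 ≤ v.length := List.length_pos_iff.2 hv
  by_cases hiS : OccursAt x₀ v i
  · exact ⟨i, le_refl _, by nlinarith, hiS⟩
  obtain ⟨g, hg, hgap⟩ := hLR.1 v ⟨q₀, h0⟩
  have hq₀i : q₀ < i := lt_of_le_of_ne hi (fun h => hiS (h ▸ h0))
  have hex : ∃ j, i ≤ j ∧ OccursAt x₀ v j := by
    obtain ⟨j, h1, _, h3⟩ := hgap i
    exact ⟨j, h1, h3⟩
  obtain ⟨hj₁i, hj₁occ⟩ := Nat.find_spec hex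
  have hj₀occ : OccursAt x₀ v (Nat.findGreatest (fun m => OccursAt x₀ v m) (i - 1)) :=
    Nat.findGreatest_spec (m := q₀) (by omega) h0
  have hj₀le : Nat.findGreatest (fun m => OccursAt x₀ v m) (i - 1) ≤ i - 1 :=
    Nat.findGreatest_le _
  set j₀ := Nat.findGreatest (fun m => OccursAt x₀ v m) (i - 1) with hj₀
  set j₁ := Nat.find hex with hj₁
  have hcons : ∀ m, j₀ < m → m < j₁ → ¬ OccursAt x₀ v m := by
    intro m hm1 hm2 hocc
    rcases Nat.lt_or_ge m i with h | h
    · exact Nat.findGreatest_is_greatest hm1 (by omega) hocc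
    · exact Nat.find_min hex hm2 ⟨h, hocc⟩
  have hret : IsReturnWord x₀ v (factorAt x₀ j₀ (j₁ - j₀)) :=
    ⟨j₀, j₁, by omega, hj₀occ, hj₁occ, hcons, rfl⟩
  have hlen := hLR.2 v _ hv hret
  rw [factorAt_length] at hlen
  exact ⟨j₁, hj₁i, by omega, hj₁occ⟩

end LinRec

/-- **Bounded preimages under block maps.** Let `(X,T)` be a non-periodic linearly
recurrent minimal subshift with constant `K`, `φ : (X,T) → (Y,T)` a factor map onto a
non-periodic subshift, defined by the `r`-block map `f : A^{2r+1} → B` (that is,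
`(φ x)_i = f(x_{[i,i+2r]})`). Extending `f` to words, there is `n₀` such that every
`u ∈ L(Y)` with `|u| ≥ n₀` has at most `4K(K+1)` preimage words
`v ∈ L(X)` with `|v| = |u| + 2r` and `f(v) = u`. -/
theorem bounded_preimages_block_map {A B : Type*} [Fintype A] [Fintype B]
    [Inhabited A] [Inhabited B]
    [TopologicalSpace A] [DiscreteTopology A] [TopologicalSpace B] [DiscreteTopology B]
    (X : Set (ℕ → A)) (Y : Set (ℕ → B)) (K r : ℕ)
    (hX : IsMinimalSubshift X) (hXnp : ¬ X.Finite)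
    (hXLR : ∃ x ∈ X, LinearlyRecurrent x K)
    (hY : IsSubshift Y) (hYnp : ¬ Y.Finite)
    (φ : (ℕ → A) → (ℕ → B)) (hφ : IsFactorMapOn φ X Y)
    (f : (Fin (2 * r + 1) → A) → B)
    (hblock : ∀ x ∈ X, ∀ i : ℕ, φ x i = f (fun j => x (i + (j : ℕ)))) :
    ∃ n₀ : ℕ, ∀ u ∈ LangOf Y, n₀ ≤ u.length →
      { v : List A | v ∈ LangOf X ∧ v.length = u.length + 2 * r ∧
          ∀ i < u.length, u.getD i default = f (fun j => v.getD (i + (j : ℕ)) default) }.Finite ∧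
      { v : List A | v ∈ LangOf X ∧ v.length = u.length + 2 * r ∧
          ∀ i < u.length, u.getD i default = f (fun j => v.getD (i + (j : ℕ)) default) }.ncard ≤
        4 * K * (K + 1) := by
  classical
  obtain ⟨x₀, hx₀X, hLR⟩ := hXLR
  have hK1 : 1 ≤ K := one_le_of_linearlyRecurrent hLR
  set y₀ := φ x₀ with hy₀def
  -- every factor of an element of X occurs in x₀ (minimality)
  have lang : ∀ x ∈ X, ∀ (v : List A) (i : ℕ), OccursAt x v i → ∃ q, OccursAt x₀ v q := by
    intro x hx v i hocc
    by_contra hno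
    push_neg at hno
    have hopen : ∀ q : ℕ, IsOpen {z : ℕ → A | OccursAt z v q} := by
      intro q
      have hset : {z : ℕ → A | OccursAt z v q} =
          ⋂ k : Fin v.length, (fun z : ℕ → A => z (q + (k : ℕ))) ⁻¹' {v.getD k default} := by
        ext z
        simp only [Set.mem_iInter, Set.mem_setOf_eq, Set.mem_preimage, Set.mem_singleton_iff]
        constructor
        · intro h k
          exact (h.getD' k.2).symm
        · intro h
          exact occursAt_iff_getD.2 fun k hk => h ⟨k, hk⟩
      rw [hset]
      exact isOpen_iInter_of_finite fun k =>
        (continuous_apply (q + (k : ℕ))).isOpen_preimage _ (isOpen_discrete _)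
    set W : Set (ℕ → A) := X ∩ ⋂ q : ℕ, {z : ℕ → A | OccursAt z v q}ᶜ with hWdef
    have hWX : W ⊆ X := Set.inter_subset_left
    have hWcl : IsClosed W :=
      hX.1.1.inter (isClosed_iInter fun q => (hopen q).isClosed_compl)
    have hWinv : ∀ z ∈ W, shift z ∈ W := by
      rintro z ⟨hzX, hzno⟩
      rw [Set.mem_iInter] at hzno
      refine ⟨hX.1.2 z hzX, ?_⟩
      rw [Set.mem_iInter]
      intro q
      simp only [Set.mem_compl_iff, Set.mem_setOf_eq]
      intro hq
      have := hzno (q + 1)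
      simp only [Set.mem_compl_iff, Set.mem_setOf_eq] at this
      exact this (occursAt_shift.1 hq)
    rcases hX.2.2 W hWX hWcl hWinv with hE | hE
    · have hx₀W : x₀ ∈ W := by
        refine ⟨hx₀X, ?_⟩
        rw [Set.mem_iInter]
        intro q
        simp only [Set.mem_compl_iff, Set.mem_setOf_eq]
        exact hno q
      rw [hE] at hx₀W
      exact absurd hx₀W (Set.notMem_empty _)
    · have hxW : x ∈ W := hE ▸ hx
      have h2 := hxW.2
      rw [Set.mem_iInter] at h2
      have := h2 i
      simp only [Set.mem_compl_iff, Set.mem_setOf_eq] at this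
      exact this hocc
  -- transfer of windows through the block map
  have trans2 : ∀ x ∈ X, ∀ i q ℓ : ℕ, OccursAt x₀ (factorAt x i (ℓ + 2*r)) q →
      factorAt (φ x) i ℓ = factorAt y₀ q ℓ := by
    intro x hx i q ℓ hocc
    rw [factorAt_eq_iff]
    intro t ht
    rw [hblock x hx (i + t), hy₀def, hblock x₀ hx₀X (q + t)]
    congr 1
    funext j
    have hj : (j : ℕ) < 2*r + 1 := j.2
    have h1 : (factorAt x i (ℓ + 2*r)).getD (t + (j:ℕ)) default = x (i + (t + (j:ℕ))) :=
      factorAt_getD x i (by omega)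
    have h2 : (factorAt x i (ℓ + 2*r)).getD (t + (j:ℕ)) default = x₀ (q + (t + (j:ℕ))) :=
      hocc.getD' (by rw [factorAt_length]; omega)
    have e1 : i + t + (j:ℕ) = i + (t + (j:ℕ)) := by omega
    have e2 : q + t + (j:ℕ) = q + (t + (j:ℕ)) := by omega
    rw [e1, e2, ← h1]
    exact h2
  have htrans : ∀ p q ℓ : ℕ, OccursAt x₀ (factorAt x₀ p (ℓ + 2*r)) q →
      factorAt y₀ q ℓ = factorAt y₀ p ℓ := by
    intro p q ℓ h
    exact (trans2 x₀ hx₀X p q ℓ h).symm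
  -- the language of Y is contained in that of y₀
  have langY : ∀ y ∈ Y, ∀ i ℓ : ℕ, ∃ q, factorAt y i ℓ = factorAt y₀ q ℓ := by
    intro y hy i ℓ
    rw [← hφ.2.1] at hy
    obtain ⟨x, hx, rfl⟩ := hy
    obtain ⟨q, hq⟩ := lang x hx (factorAt x i (ℓ + 2*r)) i (occursAt_factorAt x i (ℓ + 2*r))
    exact ⟨q, trans2 x hx i q ℓ hq⟩
  have hy₀nUP : ¬ UltimatelyPeriodic y₀ := fun hUP =>
    hYnp (finite_of_ultimatelyPeriodic y₀ Y hUP fun y hy ℓ => langY y hy 0 ℓ)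
  have hMH : ∀ e, 1 ≤ e → e + 1 ≤ (factSet y₀ e).ncard := by
    intro e he
    by_contra h
    exact hy₀nUP (ultimatelyPeriodic_of_complexity_le he (by omega))
  -- the period lemma: occurrences of long factors of y₀ are far apart
  have period : ∀ (u : List B) (p e : ℕ), OccursAt y₀ u p → OccursAt y₀ u (p + e) →
      1 ≤ e → e < u.length → u.length ≤ K * (e + 2*r) + e := by
    intro u p e h1 h2 he hen
    by_contra hcon
    push_neg at hcon
    have hper : ∀ s, s + e < u.length → u.getD (s + e) default = u.getD s default := by
      intro s hs
      rw [h1.getD' hs, h2.getD' (by omega)]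
      congr 1
      omega
    have hFfin : (factSet y₀ e).Finite := factSet_finite y₀ e
    set qv : List B → ℕ := fun w => if h : IsFactor y₀ w then h.choose else 0 with hqvdef
    have hqv : ∀ w, IsFactor y₀ w → OccursAt y₀ w (qv w) := by
      intro w h
      simp only [hqvdef, dif_pos h]
      exact h.choose_spec
    obtain ⟨M, hM⟩ := (hFfin.image qv).bddAbove
    obtain ⟨J, hJ1, hJ2, hJocc⟩ := syndetic_occ hLR
      (factorAt_ne_nil x₀ p (by omega)) (occursAt_factorAt x₀ p (u.length + 2*r))
      (max p M) (le_max_left _ _)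
    have hJM : M ≤ J := le_trans (le_max_right p M) hJ1
    have hJu : OccursAt y₀ u J := by
      show factorAt y₀ J u.length = u
      rw [htrans p J u.length hJocc]
      exact h1
    have hsubset : factSet y₀ e ⊆
        (fun s => (List.range e).map fun a => u.getD (s + a) default) '' Set.Iio e := by
      intro w hw
      have hq : OccursAt y₀ w (qv w) := hqv w hw.2
      have hqM : qv w ≤ M := hM ⟨w, hw, rfl⟩
      obtain ⟨j, hj1, hj2, hjocc⟩ := syndetic_occ hLR
        (factorAt_ne_nil x₀ (qv w) (by omega)) (occursAt_factorAt x₀ (qv w) (e + 2*r))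
        J (by omega)
      rw [factorAt_length] at hj2
      have hwj : factorAt y₀ j e = w := by
        rw [htrans (qv w) j e hjocc, ← hw.1]
        exact hq
      have hje : j - J + e ≤ u.length := by omega
      have hwt : w = (List.range e).map fun a => u.getD ((j - J) + a) default := by
        rw [← hwj]
        simp only [factorAt]
        apply List.map_inj_left.2
        intro a ha
        rw [List.mem_range] at ha
        have h3 : u.getD ((j - J) + a) default = y₀ (J + ((j - J) + a)) :=
          hJu.getD' (by omega)
        rw [h3]
        congr 1
        omega
      have hred : ∀ t', t' + e ≤ u.length →
          ((List.range e).map fun a => u.getD (t' + a) default) =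
          (List.range e).map fun a => u.getD (t' % e + a) default := by
        intro t'
        induction t' using Nat.strong_induction_on with
        | _ t' ih =>
          intro ht'
          rcases Nat.lt_or_ge t' e with h | h
          · rw [Nat.mod_eq_of_lt h]
          · have hstep : ((List.range e).map fun a => u.getD (t' + a) default) =
                (List.range e).map fun a => u.getD (t' - e + a) default := by
              apply List.map_inj_left.2
              intro a ha
              rw [List.mem_range] at ha
              have hp := hper (t' - e + a) (by omega)
              have e1 : t' - e + a + e = t' + a := by omega
              rw [e1] at hp
              exact hp
            rw [hstep, ih (t' - e) (by omega) (by omega), Nat.mod_eq_sub_mod h]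
      refine ⟨(j - J) % e, Nat.mod_lt _ (by omega), ?_⟩
      exact (hwt.trans (hred (j - J) hje)).symm
    have hcard : (factSet y₀ e).ncard ≤ e := by
      calc (factSet y₀ e).ncard
          ≤ ((fun s => (List.range e).map fun a => u.getD (s + a) default) '' Set.Iio e).ncard :=
            Set.ncard_le_ncard hsubset ((Set.finite_Iio _).image _)
        _ ≤ (Set.Iio e).ncard := Set.ncard_image_le (Set.finite_Iio _)
        _ = e := ncard_Iio e
    have := hMH e he
    omega
  -- the main counting argument
  refine ⟨8*(K*r) + 4*K + 2*r + 2, ?_⟩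
  intro u huY hulen
  set P := {v : List A | v ∈ LangOf X ∧ v.length = u.length + 2 * r ∧
      ∀ i < u.length, u.getD i default = f (fun j => v.getD (i + (j : ℕ)) default)} with hPdef
  have hPfin : P.Finite := (finite_length_eq A (u.length + 2 * r)).subset fun v hv => hv.2.1
  refine ⟨hPfin, ?_⟩
  have hexq : ∀ v ∈ P, ∃ q, OccursAt x₀ v q := by
    intro v hv
    obtain ⟨x, hx, i, hocc⟩ := hv.1
    exact lang x hx v i hocc
  set qf : List A → ℕ := fun v => if h : ∃ q, OccursAt x₀ v q then h.choose else 0 with hqfdef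
  have hqf : ∀ v ∈ P, OccursAt x₀ v (qf v) := by
    intro v hv
    have h := hexq v hv
    simp only [hqfdef, dif_pos h]
    exact h.choose_spec
  obtain ⟨M, hM⟩ := (hPfin.image qf).bddAbove
  have hvlen1 : ∀ v ∈ P, v ≠ [] := by
    intro v hv h
    have h2 := hv.2.1
    rw [h] at h2
    simp at h2
    omega
  set pos : List A → ℕ := fun v =>
    if h : ∃ j, M ≤ j ∧ j < M + K * v.length ∧ OccursAt x₀ v j then h.choose else 0 with hposdef
  have hpos : ∀ v ∈ P, M ≤ pos v ∧ pos v < M + K * v.length ∧ OccursAt x₀ v (pos v) := by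
    intro v hv
    have h : ∃ j, M ≤ j ∧ j < M + K * v.length ∧ OccursAt x₀ v j := by
      obtain ⟨j, hj1, hj2, hj3⟩ := syndetic_occ hLR (hvlen1 v hv) (hqf v hv) M (hM ⟨v, hv, rfl⟩)
      exact ⟨j, hj1, hj2, hj3⟩
    simp only [hposdef, dif_pos h]
    exact h.choose_spec
  have hvy : ∀ v ∈ P, OccursAt y₀ u (pos v) := by
    intro v hv
    obtain ⟨hp1, hp2, hocc⟩ := hpos v hv
    show factorAt y₀ (pos v) u.length = u
    apply factorAt_eq_of_getD rfl
    intro t ht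
    rw [hy₀def, hblock x₀ hx₀X (pos v + t), hv.2.2 t ht]
    congr 1
    funext j
    have hj : (j : ℕ) < 2*r + 1 := j.2
    have h3 : v.getD (t + (j:ℕ)) default = x₀ (pos v + (t + (j:ℕ))) :=
      hocc.getD' (by rw [hv.2.1]; omega)
    rw [h3]
    congr 1
    omega
  have hposinj : ∀ v ∈ P, ∀ v' ∈ P, pos v = pos v' → v = v' := by
    intro v hv v' hv' h
    have e1 : v = factorAt x₀ (pos v) (u.length + 2*r) := by
      have h5 := (hpos v hv).2.2.eq_factorAt
      rw [hv.2.1] at h5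
      exact h5
    have e2 : v' = factorAt x₀ (pos v') (u.length + 2*r) := by
      have h5 := (hpos v' hv').2.2.eq_factorAt
      rw [hv'.2.1] at h5
      exact h5
    rw [e1, e2, h]
  -- arithmetic setup
  have h2Kr : 2*(K*r) ≤ u.length := by omega
  set a := u.length - 2*(K*r) with hadef
  have ha : a + 2*(K*r) = u.length := by omega
  set D := a / (K + 1) with hDdef
  have hdm := Nat.div_add_mod a (K + 1)
  rw [← hDdef] at hdm
  have hmlt : a % (K + 1) < K + 1 := Nat.mod_lt _ (by omega)
  have hD1 : 1 ≤ D := by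
    rw [hDdef, Nat.le_div_iff_mul_le (by omega : 0 < K + 1)]
    omega
  have hgap : ∀ v ∈ P, ∀ v' ∈ P, pos v < pos v' → D ≤ pos v' - pos v := by
    intro v hv v' hv' hlt
    have hu1 : OccursAt y₀ u (pos v) := hvy v hv
    have hu2 : OccursAt y₀ u (pos v + (pos v' - pos v)) := by
      rw [show pos v + (pos v' - pos v) = pos v' by omega]
      exact hvy v' hv'
    rcases Nat.lt_or_ge (pos v' - pos v) u.length with hlt2 | hge
    · have hperiod := period u (pos v) (pos v' - pos v) hu1 hu2 (by omega) hlt2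
      have hexp : K * ((pos v' - pos v) + 2*r) + (pos v' - pos v) =
          (K+1)*(pos v' - pos v) + 2*(K*r) := by ring
      rw [hexp] at hperiod
      have hh : a ≤ (K+1) * (pos v' - pos v) := by omega
      calc D = a / (K+1) := rfl
        _ ≤ ((K+1) * (pos v' - pos v)) / (K+1) := Nat.div_le_div_right hh
        _ = pos v' - pos v := Nat.mul_div_cancel_left _ (by omega)
    · have hh : D ≤ a := Nat.div_le_self _ _
      omega
  set Q : List A → ℕ := fun v => (pos v - M) / D with hQdef
  have hQle : ∀ v ∈ P, Q v ≤ (K * (u.length + 2*r) - 1) / D := by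
    intro v hv
    have h2 := (hpos v hv).2.1
    rw [hv.2.1] at h2
    have h1 := (hpos v hv).1
    exact Nat.div_le_div_right (by omega)
  have hQinj : Set.InjOn Q P := by
    have main : ∀ v ∈ P, ∀ v' ∈ P, pos v < pos v' → Q v = Q v' → False := by
      intro v hv v' hv' hlt hQ
      have hgap' := hgap v hv v' hv' hlt
      have hM1 := (hpos v hv).1
      have d1 := Nat.div_add_mod (pos v - M) D
      have d2 := Nat.div_add_mod (pos v' - M) D
      have m1 : (pos v - M) % D < D := Nat.mod_lt _ (by omega)
      have m2 : (pos v' - M) % D < D := Nat.mod_lt _ (by omega)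
      have hQ' : (pos v - M) / D = (pos v' - M) / D := hQ
      rw [hQ'] at d1
      omega
    intro v hv v' hv' h
    by_contra hne
    have hpne : pos v ≠ pos v' := fun hp => hne (hposinj v hv v' hv' hp)
    rcases lt_or_gt_of_ne hpne with hc | hc
    · exact main v hv v' hv' hc h
    · exact main v' hv' v hv hc h.symm
  have hQim : Q '' P ⊆ Set.Iic ((K * (u.length + 2*r) - 1) / D) := by
    rintro _ ⟨v, hv, rfl⟩
    exact hQle v hv
  have hcount : P.ncard ≤ (K * (u.length + 2*r) - 1) / D + 1 := by
    calc P.ncard = (Q '' P).ncard := (Set.ncard_image_of_injOn hQinj).symm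
      _ ≤ (Set.Iic ((K * (u.length + 2*r) - 1) / D)).ncard :=
          Set.ncard_le_ncard hQim (Set.finite_Iic _)
      _ = (K * (u.length + 2*r) - 1) / D + 1 := ncard_Iic _
  have h2 : u.length + 2*r ≤ 4*((K+1)*D) := by omega
  have h3 : K*(u.length + 2*r) ≤ K*(4*((K+1)*D)) := Nat.mul_le_mul (le_refl K) h2
  have h4 : K*(4*((K+1)*D)) = 4*K*(K+1)*D := by ring
  have h5 : 1 ≤ K*(u.length + 2*r) := by
    have h6 := Nat.mul_le_mul hK1 (show 1 ≤ u.length + 2*r by omega)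
    simpa using h6
  have hRlt : (K * (u.length + 2*r) - 1) / D < 4*K*(K+1) := by
    rw [Nat.div_lt_iff_lt_mul (by omega : 0 < D)]
    omega
  omega
end

section
/- Let p and q be multiplicatively independent integers, each at least 2. Let σ be a substitution of constant length p on a finite alphabet A with fixed point y, let τ be a substitution of constant length q on a finite alphabet B with fixed point z, and let φ : A → C and ψ : B → C be letter-to-letter morphisms with φ(y) = ψ(z) = x. Then every word having infinitely many occurrences in x occurs in x with bounded gaps. -/
/-!
Suppose a word `u` occurring infinitely often in `x` had unbounded gaps.

From `x = φ(y)`: desubstituting occurrences of `u` and pigeonholing over two-letter words of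
`y` gives a recurrent two-letter word `w` with `u` inside `φ(σˢ(w))` and `w` inside its own
image `σᵐ(w)` at some offset `r`. So `w` reoccurs along the orbit `J (k + 1) = pᵐ J k + r`,
and `u` occurs within a bounded distance of `pˢ J k`, a point growing like a constant
times `pᵐᵏ`.

From `x = ψ(z)`: long gaps give `u`-free blocks `ψ(τᵗ(z κ))` at every level `t`;
pigeonholing letters and the first letters of their iterates yields a letter `c` of `z` with
`τⁿ(c)` beginning with `c` and `u`-free images `τ^(ρ + kn)(c)`. These are `u`-free windows
`[κ W, (κ + 1) W)` of `x` with `W = q^ρ q^(nk)`.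

Since `log pᵐ / log qⁿ` is irrational, `pᵐᵏ / qⁿᵏ'` is dense in `(0, ∞)`, so some
`pˢ J k` falls in the middle of such a window: a contradiction.
-/

/-- Extension of a morphism `σ : A → A*` to words by concatenation. -/
def substWord {A : Type*} (σ : A → List A) (w : List A) : List A := w.flatMap σ

/-- `σⁿ(u)` : the `n`-th iterate of the morphism `σ` applied to the word `u`. -/
def wordIter {A : Type*} (σ : A → List A) (n : ℕ) (u : List A) : List A :=
  (substWord σ)^[n] u

/-- The prefix of length `n` of a one-sided sequence. -/
def seqPrefix {A : Type*} (x : ℕ → A) (n : ℕ) : List A := (List.range n).map x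

/-- The word `w` is a prefix of the sequence `x`. -/
def IsPrefixSeq {A : Type*} (w : List A) (x : ℕ → A) : Prop := w = seqPrefix x w.length

/-- `x` is a fixed point of `σ`, i.e. `σ(x) = x`: the image under `σ` of every prefix
of `x` is again a prefix of `x`. -/
def IsFixedPoint {A : Type*} (σ : A → List A) (x : ℕ → A) : Prop :=
  ∀ n, IsPrefixSeq (substWord σ (seqPrefix x n)) x

/-- `σ` is a substitution: some letter `a` is the first letter of `σ(a)`, and
`|σⁿ(b)| → ∞` for every letter `b`. -/
def IsSubstitution {A : Type*} (σ : A → List A) : Prop :=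
  (∃ a, (σ a).head? = some a) ∧
  ∀ b, Filter.Tendsto (fun n => (wordIter σ n [b]).length) Filter.atTop Filter.atTop

/-- `σ` is of constant length `p`. -/
def ConstantLength {A : Type*} (σ : A → List A) (p : ℕ) : Prop := ∀ a, (σ a).length = p
/-- Integers `p, q` are multiplicatively independent:
`p^k = q^l` (k, l ∈ ℕ) implies `k = l = 0`. -/
def MultiplicativelyIndependent (p q : ℕ) : Prop :=
  ∀ k l : ℕ, p ^ k = q ^ l → k = 0 ∧ l = 0

open Set

theorem Set.Infinite.exists_infinite_fiber_of_mapsTo {α β : Type*} {s : Set α} {t : Set β}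
    {f : α → β} (hs : s.Infinite) (hf : MapsTo f s t) (ht : t.Finite) :
    ∃ b ∈ t, {a ∈ s | f a = b}.Infinite := by
  by_contra! h
  refine hs ((ht.biUnion h).subset fun a ha => ?_)
  exact mem_biUnion (hf ha) ⟨ha, rfl⟩

theorem Set.Infinite.image_div {s : Set ℕ} (hs : s.Infinite) {d : ℕ} (hd : 0 < d) :
    ((· / d) '' s).Infinite := by
  refine infinite_of_forall_exists_gt fun a => ?_
  obtain ⟨i, hi, hai⟩ := hs.exists_gt ((a + 1) * d)
  exact ⟨i / d, mem_image_of_mem _ hi, (Nat.le_div_iff_mul_le hd).2 hai.le⟩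

theorem Set.Infinite.exists_forall_add_mul_mem {S : Set ℕ} (hS : S.Infinite) {m : ℕ}
    (hm : 0 < m) (hdown : ∀ n, n + m ∈ S → n ∈ S) : ∃ ρ, ∀ k, ρ + k * m ∈ S := by
  have hdown_mul : ∀ e n, n + e * m ∈ S → n ∈ S := by
    intro e
    induction e with
    | zero => simp
    | succ e ih => exact fun n h => ih n (hdown _ (by rwa [add_assoc, ← Nat.succ_mul]))
  obtain ⟨ρ, -, hρ⟩ := hS.exists_infinite_fiber_of_mapsTo (f := (· % m))
    (fun n _ => Nat.mod_lt n hm) (finite_Iio m)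
  refine ⟨ρ, fun k => ?_⟩
  obtain ⟨n, ⟨hnS, rfl⟩, hn⟩ := hρ.exists_gt (k * m + m)
  obtain ⟨e, he⟩ : ∃ e, n / m = k + e := Nat.exists_eq_add_of_le (by
    by_contra! h
    have := Nat.mod_add_div n m
    have := Nat.mod_lt n hm
    nlinarith)
  refine hdown_mul e _ ?_
  convert hnS using 1
  conv_rhs => rw [← Nat.mod_add_div n m, he]
  ring

theorem sub_one_mul_iterate_add {P : ℕ} (hP : 1 ≤ P) (r j k : ℕ) :
    (P - 1) * (fun i => P * i + r)^[k] j + r = ((P - 1) * j + r) * P ^ k := by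
  obtain ⟨P, rfl⟩ := Nat.exists_eq_add_of_le' hP
  induction k with
  | zero => simp
  | succ k ih =>
    rw [Function.iterate_succ_apply', pow_succ, ← mul_assoc, ← ih]
    simp only [Nat.add_sub_cancel]
    ring

section Words

variable {A C : Type*}

theorem substWord_append (σ : A → List A) (v w : List A) :
    substWord σ (v ++ w) = substWord σ v ++ substWord σ w :=
  List.flatMap_append ..

theorem wordIter_add (σ : A → List A) (m n : ℕ) (w : List A) :
    wordIter σ (m + n) w = wordIter σ m (wordIter σ n w) :=
  Function.iterate_add_apply ..

theorem wordIter_succ (σ : A → List A) (m : ℕ) (w : List A) :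
    wordIter σ (m + 1) w = substWord σ (wordIter σ m w) :=
  Function.iterate_succ_apply' ..

theorem wordIter_append (σ : A → List A) (m : ℕ) (v w : List A) :
    wordIter σ m (v ++ w) = wordIter σ m v ++ wordIter σ m w := by
  induction m with
  | zero => rfl
  | succ m ih => rw [wordIter_succ, wordIter_succ, wordIter_succ, ih, substWord_append]

theorem List.IsPrefix.wordIter (σ : A → List A) (m : ℕ) {v w : List A} (h : v <+: w) :
    wordIter σ m v <+: wordIter σ m w := by
  obtain ⟨t, rfl⟩ := h
  exact ⟨_, (wordIter_append σ m v t).symm⟩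

theorem List.IsInfix.wordIter (σ : A → List A) (m : ℕ) {v w : List A} (h : v <:+: w) :
    wordIter σ m v <:+: wordIter σ m w := by
  obtain ⟨s, t, rfl⟩ := h
  exact ⟨_, _, by rw [wordIter_append, wordIter_append]⟩

theorem length_substWord {σ : A → List A} {p : ℕ} (hσ : ConstantLength σ p) (w : List A) :
    (substWord σ w).length = p * w.length := by
  induction w with
  | nil => rfl
  | cons a w ih =>
    rw [← List.singleton_append, substWord_append, List.length_append, ih]
    simp [substWord, hσ a, Nat.mul_succ, Nat.add_comm]

theorem length_wordIter {σ : A → List A} {p : ℕ} (hσ : ConstantLength σ p) (m : ℕ)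
    (w : List A) : (wordIter σ m w).length = p ^ m * w.length := by
  induction m with
  | zero => simp [wordIter]
  | succ m ih => rw [wordIter_succ, length_substWord hσ, ih, pow_succ, mul_left_comm, mul_assoc]

@[simp]
theorem length_factorAt (x : ℕ → A) (i n : ℕ) : (factorAt x i n).length = n := by
  simp [factorAt]

theorem factorAt_add (x : ℕ → A) (i a b : ℕ) :
    factorAt x i (a + b) = factorAt x i a ++ factorAt x (i + a) b := by
  simp only [factorAt, List.range_add, List.map_append, List.map_map]
  congr 1
  exact List.map_congr_left fun k _ => by simp [Nat.add_assoc]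

@[simp]
theorem factorAt_one (x : ℕ → A) (i : ℕ) : factorAt x i 1 = [x i] := by
  simp [factorAt]

theorem factorAt_comp (φ : A → C) (x : ℕ → A) (i n : ℕ) :
    factorAt (φ ∘ x) i n = (factorAt x i n).map φ := by
  simp [factorAt]

theorem seqPrefix_eq_factorAt (x : ℕ → A) (n : ℕ) : seqPrefix x n = factorAt x 0 n := by
  simp [seqPrefix, factorAt]

theorem occursAt_of_factorAt_eq {x : ℕ → A} {i n : ℕ} {pre v suf : List A}
    (h : factorAt x i n = pre ++ v ++ suf) : OccursAt x v (i + pre.length) := by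
  have hn : n = pre.length + v.length + suf.length := by
    simpa [Nat.add_assoc] using congrArg List.length h
  rw [hn, factorAt_add, factorAt_add] at h
  exact (List.append_inj (List.append_inj h (by simp)).1 (by simp)).2

theorem occursAt_of_prefix_factorAt {x : ℕ → A} {v : List A} {i n : ℕ}
    (h : v <+: factorAt x i n) : OccursAt x v i := by
  obtain ⟨t, ht⟩ := h
  exact occursAt_of_factorAt_eq (pre := []) ht.symm

theorem infix_factorAt_iff {x : ℕ → A} {v : List A} {i n : ℕ} :
    v <:+: factorAt x i n ↔ ∃ j, i ≤ j ∧ j + v.length ≤ i + n ∧ OccursAt x v j := by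
  constructor
  · rintro ⟨pre, suf, h⟩
    have hn : pre.length + v.length + suf.length = n := by
      simpa [Nat.add_assoc] using congrArg List.length h
    exact ⟨i + pre.length, by omega, by omega, occursAt_of_factorAt_eq h.symm⟩
  · rintro ⟨j, hij, hjn, hocc⟩
    obtain ⟨a, rfl⟩ := Nat.exists_eq_add_of_le hij
    obtain ⟨b, rfl⟩ : ∃ b, n = a + v.length + b := ⟨n - a - v.length, by omega⟩
    refine ⟨factorAt x i a, factorAt x (i + a + v.length) b, ?_⟩
    rw [factorAt_add, factorAt_add, hocc, Nat.add_assoc]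

theorem factorAt_infix_factorAt (x : ℕ → A) {i j m n : ℕ} (hij : i ≤ j)
    (hm : j + m ≤ i + n) : factorAt x j m <:+: factorAt x i n :=
  infix_factorAt_iff.2 ⟨j, hij, by simpa using hm, by simp [OccursAt]⟩

end Words

section FixedPoint

variable {A C : Type*} {σ : A → List A} {p : ℕ} {y : ℕ → A}

theorem IsFixedPoint.wordIter_seqPrefix (hσ : ConstantLength σ p) (hy : IsFixedPoint σ y)
    (m n : ℕ) : wordIter σ m (seqPrefix y n) = seqPrefix y (p ^ m * n) := by
  induction m with
  | zero => simp [wordIter]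
  | succ m ih =>
    rw [wordIter_succ, ih, hy, length_substWord hσ, ← ih, length_wordIter hσ]
    simp [seqPrefix, pow_succ, mul_left_comm, mul_comm]

theorem IsFixedPoint.factorAt_pow_mul (hσ : ConstantLength σ p) (hy : IsFixedPoint σ y)
    (m j n : ℕ) : factorAt y (p ^ m * j) (p ^ m * n) = wordIter σ m (factorAt y j n) := by
  have h := hy.wordIter_seqPrefix hσ m (j + n)
  rw [seqPrefix_eq_factorAt, seqPrefix_eq_factorAt, factorAt_add, wordIter_append, mul_add,
    factorAt_add, ← seqPrefix_eq_factorAt, ← seqPrefix_eq_factorAt,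
    hy.wordIter_seqPrefix hσ, Nat.zero_add, Nat.zero_add] at h
  exact (List.append_cancel_left h).symm

theorem IsFixedPoint.exists_offset_of_infix_wordIter (hσ : ConstantLength σ p)
    (hy : IsFixedPoint σ y) {m : ℕ} {v w : List A} (h : v <:+: wordIter σ m w) :
    ∃ r, ∀ j, OccursAt y w j → OccursAt y v (p ^ m * j + r) := by
  obtain ⟨pre, suf, hw⟩ := h
  refine ⟨pre.length, fun j hj => ?_⟩
  apply occursAt_of_factorAt_eq (n := p ^ m * w.length) (suf := suf)
  rw [hy.factorAt_pow_mul hσ, hj, hw]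

theorem IsFixedPoint.infix_map_wordIter_factorAt_div (hp : 0 < p) (hσ : ConstantLength σ p)
    (hy : IsFixedPoint σ y) {φ : A → C} {u : List C} {i m : ℕ} (hu : OccursAt (φ ∘ y) u i)
    (hm : u.length ≤ p ^ m) : u <:+: (wordIter σ m (factorAt y (i / p ^ m) 2)).map φ := by
  have hpm : 0 < p ^ m := pow_pos hp m
  rw [← hy.factorAt_pow_mul hσ, ← factorAt_comp, infix_factorAt_iff]
  refine ⟨i, Nat.mul_div_le i (p ^ m), ?_, hu⟩
  have := Nat.lt_mul_div_succ i hpm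
  nlinarith

variable [Finite A]

theorem IsFixedPoint.exists_recurrent_pair_infix (hp : 0 < p) (hσ : ConstantLength σ p)
    (hy : IsFixedPoint σ y) {φ : A → C} {u : List C} {m : ℕ}
    (hu : {i | OccursAt (φ ∘ y) u i}.Infinite) (hm : u.length ≤ p ^ m) :
    ∃ v : List A, v.length = 2 ∧ {j | OccursAt y v j}.Infinite ∧
      u <:+: (wordIter σ m v).map φ := by
  obtain ⟨v, hv, hfib⟩ := hu.exists_infinite_fiber_of_mapsTo
    (f := fun i => factorAt y (i / p ^ m) 2) (fun i _ => length_factorAt ..)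
    (List.finite_length_eq A 2)
  obtain ⟨i, ⟨hi, rfl⟩⟩ := hfib.nonempty
  refine ⟨_, hv, (hfib.image_div (pow_pos hp m)).mono ?_,
    hy.infix_map_wordIter_factorAt_div hp hσ hi hm⟩
  rintro _ ⟨j, ⟨-, hj⟩, rfl⟩
  simpa [OccursAt] using hj

/-- Iterating a choice of recurrent pair whose `σ`-image contains the previous one must cycle,
as there are finitely many pairs. -/
theorem IsFixedPoint.exists_pair_infix_wordIter_self (hp : 2 ≤ p) (hσ : ConstantLength σ p)
    (hy : IsFixedPoint σ y) {v : List A} (hv : v.length = 2)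
    (hrec : {j | OccursAt y v j}.Infinite) :
    ∃ w : List A, w.length = 2 ∧ {j | OccursAt y w j}.Infinite ∧
      ∃ a m, 0 < m ∧ v <:+: wordIter σ a w ∧ w <:+: wordIter σ m w := by
  set R := {w : List A | w.length = 2 ∧ {j | OccursAt y w j}.Infinite}
  have hstep : ∀ w ∈ R, ∃ w' ∈ R, w <:+: wordIter σ 1 w' := by
    rintro w ⟨hw, hwrec⟩
    obtain ⟨w', hw', hw'rec, hinf⟩ := hy.exists_recurrent_pair_infix (φ := id) (m := 1)
      (by omega) hσ hwrec (by rw [pow_one]; omega)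
    exact ⟨w', ⟨hw', hw'rec⟩, by simpa using hinf⟩
  choose! f hfR hf using hstep
  have hmem : ∀ n, f^[n] v ∈ R := fun n => MapsTo.iterate hfR n ⟨hv, hrec⟩
  have hchain : ∀ a n, f^[a] v <:+: wordIter σ n (f^[a + n] v) := by
    intro a n
    induction n with
    | zero => exact List.infix_refl _
    | succ n ih =>
      refine ih.trans ?_
      rw [← Nat.add_assoc, wordIter_add, Function.iterate_succ_apply']
      exact (hf _ (hmem _)).wordIter σ n
  obtain ⟨a, b, hab, heq⟩ := Set.Finite.exists_lt_map_eq_of_forall_mem (f := (f^[·] v)) hmem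
    ((List.finite_length_eq A 2).subset fun _ h => h.1)
  refine ⟨f^[a] v, (hmem a).1, (hmem a).2, a, b - a, by omega, by simpa using hchain 0 a, ?_⟩
  simpa [heq, Nat.add_sub_cancel' hab.le] using hchain a (b - a)

/-- `N k = pˢ J k`, where `J` is the orbit of an occurrence of a recurrent pair `w` under
`j ↦ pᵐ j + r`, with `w` occurring in `σᵐ(w)` at offset `r` and `u` inside `φ(σˢ(w))`. -/
theorem IsFixedPoint.exists_geometric_occurrences (hp : 2 ≤ p) (hσ : ConstantLength σ p)
    (hy : IsFixedPoint σ y) {φ : A → C} {u : List C}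
    (hu : {i | OccursAt (φ ∘ y) u i}.Infinite) :
    ∃ m, 0 < m ∧ ∃ D, 0 < D ∧ ∃ R E, ∃ N : ℕ → ℕ, ∀ k,
      (p ^ m - 1) * N k + R = D * (p ^ m) ^ k ∧ u <:+: factorAt (φ ∘ y) (N k) E := by
  obtain ⟨v, hv, hvrec, huv⟩ :=
    hy.exists_recurrent_pair_infix (m := u.length) (by omega) hσ hu (Nat.lt_pow_self hp).le
  obtain ⟨w, hw, hwrec, a, m, hm, hvw, hww⟩ :=
    hy.exists_pair_infix_wordIter_self hp hσ hv hvrec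
  obtain ⟨r, hr⟩ := hy.exists_offset_of_infix_wordIter hσ hww
  obtain ⟨j₀, hj₀, hj₀pos⟩ := hwrec.exists_gt 0
  set s := u.length + a
  set J := fun k => (fun i => p ^ m * i + r)^[k] j₀
  have hJ : ∀ k, OccursAt y w (J k) := by
    intro k
    induction k with
    | zero => exact hj₀
    | succ k ih => simpa [J, Function.iterate_succ_apply'] using hr _ ih
  have hpm : 2 ≤ p ^ m := le_trans hp (Nat.le_self_pow hm.ne' p)
  refine ⟨m, hm, p ^ s * ((p ^ m - 1) * j₀ + r), ?_, p ^ s * r, p ^ s * 2, fun k => p ^ s * J k,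
    fun k => ⟨?_, ?_⟩⟩
  · have : 0 < (p ^ m - 1) * j₀ := Nat.mul_pos (by omega) hj₀pos
    positivity
  · rw [mul_assoc, ← sub_one_mul_iterate_add (by omega)]
    ring
  · rw [← hw, factorAt_comp, hy.factorAt_pow_mul hσ, hJ k]
    refine huv.trans (List.IsInfix.map φ ?_)
    rw [wordIter_add]
    exact hvw.wordIter σ _

end FixedPoint

section FreeBlocks

variable {B C : Type*} {x : ℕ → C} {u : List C}

theorem exists_block_not_infix_of_not_boundedGaps (hbg : ¬ BoundedGaps x u) {d : ℕ}
    (hd : 0 < d) : ∃ k, ¬ u <:+: factorAt x (d * k) d := by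
  simp only [BoundedGaps, not_exists, not_and, not_forall] at hbg
  obtain ⟨i, hi⟩ := hbg (2 * d + 1) (by omega)
  refine ⟨i / d + 1, fun h => ?_⟩
  obtain ⟨j, hj₁, hj₂, hj⟩ := infix_factorAt_iff.1 h
  have h₁ := Nat.lt_mul_div_succ i hd
  have h₂ := Nat.mul_div_le i d
  rw [Nat.mul_add_one] at h₁ hj₁ hj₂
  exact hi j (by omega) (by omega) hj

variable [Finite B] {τ : B → List B} {q : ℕ} {z : ℕ → B} {ψ : B → C}

theorem IsFixedPoint.exists_infinite_free_levels (hq : 0 < q) (hτ : ConstantLength τ q)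
    (hz : IsFixedPoint τ z) (hbg : ¬ BoundedGaps (ψ ∘ z) u) :
    ∃ κ, {t | ¬ u <:+: (wordIter τ t [z κ]).map ψ}.Infinite := by
  have hblock : ∀ t, ∃ k, ¬ u <:+: (wordIter τ t [z k]).map ψ := by
    intro t
    obtain ⟨k, hk⟩ := exists_block_not_infix_of_not_boundedGaps hbg (pow_pos hq t)
    refine ⟨k, ?_⟩
    have hfac := hz.factorAt_pow_mul hτ t k 1
    rw [mul_one, factorAt_one] at hfac
    rwa [factorAt_comp, hfac] at hk
  choose k hk using hblock
  obtain ⟨b, -, hb⟩ := infinite_univ.exists_infinite_fiber_of_mapsTo (f := fun t => z (k t))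
    (mapsTo_univ _ _) finite_univ
  obtain ⟨t₀, -, rfl⟩ := hb.nonempty
  refine ⟨k t₀, hb.mono fun t ht => ?_⟩
  simpa [← ht.2] using hk t

theorem exists_singleton_prefix_wordIter_self (hq : 0 < q) (hτ : ConstantLength τ q) (b : B) :
    ∃ c j m, 0 < m ∧ [c] <+: wordIter τ j [b] ∧ [c] <+: wordIter τ m [c] := by
  have hhead : ∀ n, ∃ c, [c] <+: wordIter τ n [b] := by
    intro n
    obtain ⟨c, t, ht⟩ := List.exists_cons_of_length_pos (l := wordIter τ n [b])
      (by simp [length_wordIter hτ, hq])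
    exact ⟨c, t, ht.symm⟩
  choose c hc using hhead
  obtain ⟨j, j', hjj', heq⟩ := Set.Finite.exists_lt_map_eq_of_forall_mem (f := c)
    (fun _ => mem_univ _) finite_univ
  refine ⟨c j, j, j' - j, by omega, hc j,
    List.prefix_of_prefix_length_le (heq ▸ hc j') ?_ ?_⟩
  · rw [← Nat.sub_add_cancel hjj'.le, wordIter_add, Nat.add_sub_cancel]
    exact (hc j).wordIter τ _
  · simp [length_wordIter hτ, Nat.one_le_iff_ne_zero, hq.ne']

theorem IsFixedPoint.exists_free_geometric_blocks (hq : 0 < q) (hτ : ConstantLength τ q)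
    (hz : IsFixedPoint τ z) (hbg : ¬ BoundedGaps (ψ ∘ z) u) :
    ∃ n, 0 < n ∧ ∃ κ c, 0 < c ∧
      ∀ k, ¬ u <:+: factorAt (ψ ∘ z) (κ * (c * (q ^ n) ^ k)) (c * (q ^ n) ^ k) := by
  obtain ⟨κ, hfree⟩ := hz.exists_infinite_free_levels hq hτ hbg
  obtain ⟨c, j, n, hn, hcj, hcc⟩ := exists_singleton_prefix_wordIter_self hq hτ (z κ)
  have hzc : factorAt z (q ^ j * κ) 1 = [c] := by
    have hblock := hz.factorAt_pow_mul hτ j κ 1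
    rw [mul_one, factorAt_one] at hblock
    exact occursAt_of_prefix_factorAt (hblock ▸ hcj)
  set F := {t | ¬ u <:+: (wordIter τ t [c]).map ψ}
  have hF : F.Infinite := by
    refine infinite_of_forall_exists_gt fun N => ?_
    obtain ⟨t, ht, hNt⟩ := hfree.exists_gt (N + j)
    obtain ⟨e, rfl⟩ : ∃ e, t = e + j := ⟨t - j, by omega⟩
    refine ⟨e, fun h => ht (h.trans ?_), by omega⟩
    rw [wordIter_add]
    exact ((hcj.wordIter τ e).map ψ).isInfix
  have hdown : ∀ t, t + n ∈ F → t ∈ F := by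
    refine fun t ht h => ht (h.trans ?_)
    rw [wordIter_add]
    exact ((hcc.wordIter τ t).map ψ).isInfix
  obtain ⟨ρ, hρ⟩ := hF.exists_forall_add_mul_mem hn hdown
  refine ⟨n, hn, q ^ j * κ, q ^ ρ, pow_pos hq ρ, fun k => ?_⟩
  have hblock := hz.factorAt_pow_mul hτ (ρ + k * n) (q ^ j * κ) 1
  rw [mul_one, hzc] at hblock
  rw [← pow_mul, ← pow_add, mul_comm n, mul_comm, factorAt_comp, hblock]
  exact hρ k

end FreeBlocks

theorem exists_nat_add_mul_mem_Ioo {x c d h : ℝ} (hx : x ≤ c) (h0 : 0 < h) (hh : h < d - c) :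
    ∃ j : ℕ, x + j * h ∈ Ioo c d := by
  refine ⟨⌊(c - x) / h⌋₊ + 1, ?_, ?_⟩
  · have := Nat.lt_floor_add_one ((c - x) / h)
    rw [div_lt_iff₀ h0] at this
    push_cast
    linarith
  · have := Nat.floor_le (div_nonneg (sub_nonneg.2 hx) h0.le)
    rw [le_div_iff₀ h0] at this
    push_cast
    linarith

theorem exists_nat_mul_sub_mul_mem_Ioo_of_pos {α β c d : ℝ} (hβ : 0 < β) {a b : ℕ}
    (h0 : 0 < a * α - b * β) (hh : a * α - b * β < d - c) (K : ℕ) :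
    ∃ k k' : ℕ, K ≤ k ∧ K ≤ k' ∧ k * α - k' * β ∈ Ioo c d := by
  set k₀ := max K ⌈(K * α - c) / β⌉₊
  have hbase : K * α - k₀ * β ≤ c := by
    have := (Nat.le_ceil ((K * α - c) / β)).trans (Nat.cast_le.2 (le_max_right K _))
    rw [div_le_iff₀ hβ] at this
    linarith
  obtain ⟨j, hj⟩ := exists_nat_add_mul_mem_Ioo hbase h0 hh
  refine ⟨K + j * a, k₀ + j * b, by omega, (le_max_left K _).trans (Nat.le_add_right _ _), ?_⟩
  convert hj using 1
  push_cast
  ring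

theorem exists_nat_mul_sub_mul_mem_Ioo {α β c d : ℝ} (hα : 0 < α) (hβ : 0 < β)
    (hirr : Irrational (α / β)) (hcd : c < d) (K : ℕ) :
    ∃ k k' : ℕ, K ≤ k ∧ K ≤ k' ∧ k * α - k' * β ∈ Ioo c d := by
  obtain ⟨h, hS, hh⟩ := (dense_addSubgroupClosure_pair_iff.2 hirr).exists_between
    (lt_min (sub_pos.2 hcd) (lt_min hα hβ))
  obtain ⟨m, n, rfl⟩ := AddSubgroup.mem_closure_pair.1 hS
  simp only [zsmul_eq_mul, mem_Ioo, lt_min_iff] at hh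
  obtain ⟨hpos, hdc, hltα, hltβ⟩ := hh
  -- `0 < m α + n β < min α β` forces `m` and `n` to have opposite signs
  rcases Int.eq_nat_or_neg m with ⟨a, rfl | rfl⟩ <;>
    rcases Int.eq_nat_or_neg n with ⟨b, rfl | rfl⟩
  · exfalso
    push_cast at *
    rcases a with _ | a <;> rcases b with _ | b <;> push_cast at * <;> nlinarith
  · push_cast at *
    exact exists_nat_mul_sub_mul_mem_Ioo_of_pos hβ (a := a) (b := b)
      (by linarith) (by linarith) K
  · push_cast at *
    obtain ⟨k, k', hk, hk', h₁, h₂⟩ := exists_nat_mul_sub_mul_mem_Ioo_of_pos (α := β)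
      (c := -d) (d := -c) hα (a := b) (b := a) (by linarith) (by linarith) K
    exact ⟨k', k, hk', hk, by linarith, by linarith⟩
  · exfalso
    push_cast at *
    nlinarith [(Nat.cast_nonneg a : (0 : ℝ) ≤ a), (Nat.cast_nonneg b : (0 : ℝ) ≤ b)]

namespace MultiplicativelyIndependent

variable {p q : ℕ}

theorem pow (h : MultiplicativelyIndependent p q) {m n : ℕ} (hm : 0 < m) (hn : 0 < n) :
    MultiplicativelyIndependent (p ^ m) (q ^ n) := by
  intro k l hkl
  rw [← pow_mul, ← pow_mul] at hkl
  obtain ⟨hk, hl⟩ := h _ _ hkl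
  exact ⟨(Nat.mul_eq_zero.1 hk).resolve_left hm.ne', (Nat.mul_eq_zero.1 hl).resolve_left hn.ne'⟩

theorem irrational_log_div (h : MultiplicativelyIndependent p q) (hp : 2 ≤ p) (hq : 2 ≤ q) :
    Irrational (Real.log p / Real.log q) := by
  rintro ⟨r, hr⟩
  have hlogp : 0 < Real.log p := Real.log_pos (by exact_mod_cast hp)
  have hlogq : 0 < Real.log q := Real.log_pos (by exact_mod_cast hq)
  have hr0 : 0 < r := by exact_mod_cast hr ▸ div_pos hlogp hlogq
  obtain ⟨n, hn⟩ := Int.eq_ofNat_of_zero_le (Rat.num_pos.2 hr0).le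
  have hlog : r.den * Real.log p = n * Real.log q := by
    have hcast := Rat.cast_def (K := ℝ) r
    rw [hr, hn, div_eq_div_iff hlogq.ne' (by positivity)] at hcast
    push_cast at hcast
    linarith
  have hpow : (p : ℝ) ^ r.den = (q : ℝ) ^ n := by
    refine Real.log_injOn_pos (mem_Ioi.2 (by positivity)) (mem_Ioi.2 (by positivity)) ?_
    rw [Real.log_pow, Real.log_pow, hlog]
  exact r.den_nz (h _ _ (by exact_mod_cast hpow)).1

theorem exists_pow_between (h : MultiplicativelyIndependent p q) (hp : 2 ≤ p) (hq : 2 ≤ q)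
    {a b : ℝ} (ha : 0 < a) (hab : a < b) (K : ℕ) :
    ∃ k k' : ℕ, K ≤ k' ∧ a * q ^ k' < p ^ k ∧ (p : ℝ) ^ k < b * q ^ k' := by
  obtain ⟨k, k', -, hk', h₁, h₂⟩ := exists_nat_mul_sub_mul_mem_Ioo
    (Real.log_pos (by exact_mod_cast hp)) (Real.log_pos (by exact_mod_cast hq))
    (h.irrational_log_div hp hq) (Real.log_lt_log ha hab) K
  refine ⟨k, k', hk', ?_, ?_⟩
  · rw [← Real.log_lt_log_iff (mul_pos ha (by positivity)) (by positivity), Real.log_mul ha.ne'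
      (by positivity), Real.log_pow, Real.log_pow]
    linarith
  · rw [← Real.log_lt_log_iff (by positivity) (mul_pos (ha.trans hab) (by positivity)),
      Real.log_mul (ha.trans hab).ne' (by positivity), Real.log_pow, Real.log_pow]
    linarith

theorem exists_mem_block {D c R : ℕ} (h : MultiplicativelyIndependent p q) (hp : 2 ≤ p)
    (hq : 2 ≤ q) (hD : 0 < D) (hc : 0 < c) {N : ℕ → ℕ}
    (hN : ∀ k, (p - 1) * N k + R = D * p ^ k) (κ E : ℕ) :
    ∃ k k', κ * (c * q ^ k') ≤ N k ∧ N k + E ≤ κ * (c * q ^ k') + c * q ^ k' := by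
  set P := p - 1
  have hP : 0 < P := by omega
  have hPc : (0 : ℝ) < P * c := by exact_mod_cast Nat.mul_pos hP hc
  -- aim `D pᵏ / (p - 1) ≈ N k` at the middle third of `[κ W, (κ + 1) W)`, `W = c qᵏ'`;
  -- `R` and `E` are negligible once `W ≥ 3 R + 3 E`
  obtain ⟨k, k', hk', h₁, h₂⟩ := h.exists_pow_between hp hq
    (a := (3 * κ + 1) * P * c / (3 * D)) (b := (3 * κ + 2) * P * c / (3 * D))
    (div_pos (by rw [mul_assoc]; exact mul_pos (by positivity) hPc) (by positivity))
    (div_lt_div_of_pos_right (by rw [mul_assoc, mul_assoc]; gcongr; norm_num) (by positivity))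
    (3 * R + 3 * E)
  rw [div_mul_eq_mul_div, div_lt_iff₀ (by positivity)] at h₁
  rw [div_mul_eq_mul_div, lt_div_iff₀ (by positivity)] at h₂
  have h₁ : (3 * κ + 1) * P * c * q ^ k' < p ^ k * (3 * D) := by exact_mod_cast h₁
  have h₂ : p ^ k * (3 * D) < (3 * κ + 2) * P * c * q ^ k' := by exact_mod_cast h₂
  have hW : 3 * R + 3 * E ≤ c * q ^ k' :=
    hk'.trans ((Nat.lt_pow_self (by omega)).le.trans (Nat.le_mul_of_pos_left _ hc))
  have hPN : p ^ k * (3 * D) = 3 * (P * N k + R) := by rw [hN k]; ring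
  have hPW : c * q ^ k' ≤ P * (c * q ^ k') := Nat.le_mul_of_pos_left _ hP
  have hPE : P * (3 * E) ≤ P * (c * q ^ k') := Nat.mul_le_mul_left P (by omega)
  refine ⟨k, k', Nat.le_of_mul_le_mul_left ?_ hP, Nat.le_of_mul_le_mul_left ?_ hP⟩ <;> linarith

end MultiplicativelyIndependent

theorem words_bounded_gaps_general {A B C : Type*} [Fintype A] [Fintype B]
    (p q : ℕ) (hp : 2 ≤ p) (hq : 2 ≤ q) (hind : MultiplicativelyIndependent p q)
    (σ : A → List A) (hσlen : ConstantLength σ p)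
    (y : ℕ → A) (hy : IsFixedPoint σ y)
    (τ : B → List B) (hτlen : ConstantLength τ q)
    (z : ℕ → B) (hz : IsFixedPoint τ z)
    (φ : A → C) (ψ : B → C) (x : ℕ → C) (hφ : φ ∘ y = x) (hψ : ψ ∘ z = x) :
    ∀ u : List C, { i : ℕ | OccursAt x u i }.Infinite → BoundedGaps x u := by
  intro u hu
  by_contra hbg
  subst hφ
  obtain ⟨m, hm, D, hD, R, E, N, hN⟩ := hy.exists_geometric_occurrences hp hσlen hu
  obtain ⟨n, hn, κ, c, hc, hfree⟩ :=
    hz.exists_free_geometric_blocks (by omega) hτlen (hψ ▸ hbg)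
  have hpm : 2 ≤ p ^ m := hp.trans (Nat.le_self_pow hm.ne' p)
  have hqn : 2 ≤ q ^ n := hq.trans (Nat.le_self_pow hn.ne' q)
  obtain ⟨k, k', h₁, h₂⟩ := (hind.pow hm hn).exists_mem_block hpm hqn hD hc
    (fun k => (hN k).1) κ E
  rw [hψ] at hfree
  exact hfree k' ((hN k).2.trans (factorAt_infix_factorAt _ h₁ (by omega)))

/-- **Words appear with bounded gaps.** Let `p, q ≥ 2` be multiplicatively independent,
`σ` a substitution of constant length `p` with fixed point `y`, `τ` a substitution of
constant length `q` with fixed point `z`, and `φ, ψ` letter-to-letter morphisms with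
`φ(y) = ψ(z) = x`. Then every word having infinitely many occurrences in `x`
occurs in `x` with bounded gaps. -/
theorem words_bounded_gaps {A B C : Type*} [Fintype A] [Fintype B] [Fintype C]
    (p q : ℕ) (hp : 2 ≤ p) (hq : 2 ≤ q) (hind : MultiplicativelyIndependent p q)
    (σ : A → List A) (hσ : IsSubstitution σ) (hσlen : ConstantLength σ p)
    (y : ℕ → A) (hy : IsFixedPoint σ y)
    (τ : B → List B) (hτ : IsSubstitution τ) (hτlen : ConstantLength τ q)
    (z : ℕ → B) (hz : IsFixedPoint τ z)
    (φ : A → C) (ψ : B → C) (x : ℕ → C) (hφ : φ ∘ y = x) (hψ : ψ ∘ z = x) :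
    ∀ u : List C, { i : ℕ | OccursAt x u i }.Infinite → BoundedGaps x u :=
  words_bounded_gaps_general p q hp hq hind σ hσlen y hy τ hτlen z hz φ ψ x hφ hψ
end
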